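/- Let G be a finite simple graph containing vertices u and v such that there is exactly one path in G from u to v, this path has length at least 7 (i.e. at least six internal vertices), and every internal vertex of the path has degree 2 in G. Then some eigenvalue of A(G) is not an integer; in particular G is not an integral graph. -/

import Mathlib

open Polynomial Matrix

noncomputable section

/-- The characteristic polynomial `φ` of a matrix. -/
def phi {V : Type} [Fintype V] [DecidableEq V] (M : Matrix V V ℝ) : Polynomial ℝ :=
  M.charpoly

/-- The characteristic polynomial of the matrix with row/column `v` deleted (`φ^{G∖v}`). -/
def phiDel {V : Type} [Fintype V] [DecidableEq V] (M : Matrix V V ℝ) (v : V) : Polynomial ℝ :=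
  (M.submatrix (fun u : {u : V // u ≠ v} => (u : V)) (fun u : {u : V // u ≠ v} => (u : V))).charpoly

/-- The rational function `α_v = φ^G / φ^{G∖v}`. -/
def alpha {V : Type} [Fintype V] [DecidableEq V] (M : Matrix V V ℝ) (v : V) : RatFunc ℝ :=
  algebraMap (Polynomial ℝ) (RatFunc ℝ) (phi M) / algebraMap (Polynomial ℝ) (RatFunc ℝ) (phiDel M v)

/-- `θ` is a pole of `α_v`. -/
def IsPoleAt {V : Type} [Fintype V] [DecidableEq V] (M : Matrix V V ℝ) (v : V) (θ : ℝ) : Prop :=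
  (phi M).rootMultiplicity θ < (phiDel M v).rootMultiplicity θ

/-- `α_v(θ) = 0`. -/
def IsZeroAt {V : Type} [Fintype V] [DecidableEq V] (M : Matrix V V ℝ) (v : V) (θ : ℝ) : Prop :=
  (phiDel M v).rootMultiplicity θ < (phi M).rootMultiplicity θ

/-- Evaluation of `α_v` at a real number (meaningful away from poles). -/
def evalAlpha {V : Type} [Fintype V] [DecidableEq V] (M : Matrix V V ℝ) (v : V) (θ : ℝ) : ℝ :=
  (alpha M v).eval (RingHom.id ℝ) θ

/-- `θ` is an eigenvalue admitting an eigenvector with nonzero entry at `v`. -/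
def InSupport {V : Type} [Fintype V] (M : Matrix V V ℝ) (v : V) (θ : ℝ) : Prop :=
  ∃ x : V → ℝ, M *ᵥ x = θ • x ∧ x v ≠ 0

/-- Strong cospectrality: for each eigenvalue either all eigenvectors agree at `i` and `j`,
or they are all opposite at `i` and `j`. -/
def StronglyCospectral {V : Type} [Fintype V] (M : Matrix V V ℝ) (i j : V) : Prop :=
  ∀ θ : ℝ, (∀ x : V → ℝ, M *ᵥ x = θ • x → x i = x j) ∨
    (∀ x : V → ℝ, M *ᵥ x = θ • x → x i = - x j)

/-- `Φ⁺_{ij}`. -/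
def PhiPlus {V : Type} [Fintype V] (M : Matrix V V ℝ) (i j : V) : Set ℝ :=
  {θ | InSupport M i θ ∧ ∀ x : V → ℝ, M *ᵥ x = θ • x → x i = x j}

/-- `Φ⁻_{ij}`. -/
def PhiMinus {V : Type} [Fintype V] (M : Matrix V V ℝ) (i j : V) : Set ℝ :=
  {θ | InSupport M i θ ∧ ∀ x : V → ℝ, M *ᵥ x = θ • x → x i = - x j}

open Classical in
/-- The real adjacency matrix of a simple graph. -/
def adjMat {V : Type} (G : SimpleGraph V) : Matrix V V ℝ :=
  fun a b => if G.Adj a b then 1 else 0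

open Classical in
/-- The complex adjacency matrix of a simple graph. -/
def adjMatC {V : Type} (G : SimpleGraph V) : Matrix V V ℂ :=
  fun a b => if G.Adj a b then 1 else 0

/-- The decorated path: the rooted product of the path `P_n` with rooted graphs `G_1, …, G_n`. -/
def decoratedPath {n : ℕ} {V : Fin n → Type} (G : ∀ i, SimpleGraph (V i)) (r : ∀ i, V i) :
    SimpleGraph ((i : Fin n) × V i) :=
  SimpleGraph.fromRel (fun a b =>
    (∃ (i : Fin n) (u v : V i), a = ⟨i, u⟩ ∧ b = ⟨i, v⟩ ∧ (G i).Adj u v) ∨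
    ((a.1 : ℕ) + 1 = (b.1 : ℕ) ∧ a.2 = r a.1 ∧ b.2 = r b.1))

/-- Continued fraction `a₁ - 1/(a₂ - 1/(⋯ - 1/aₙ))`. -/
def contFrac : List (RatFunc ℝ) → RatFunc ℝ
  | [] => 0
  | x :: xs => x - 1 / contFrac xs

/-- Perfect state transfer between distinct vertices `i` and `j` at time `t`. -/
def PST {V : Type} [Fintype V] [DecidableEq V] (G : SimpleGraph V) (i j : V) (t : ℝ) : Prop :=
  i ≠ j ∧ ∃ lam : ℂ, ‖lam‖ = 1 ∧
    (NormedSpace.exp ((Complex.I * (t : ℂ)) • adjMatC G)) *ᵥ (Pi.single i 1 : V → ℂ) =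
      lam • (Pi.single j 1 : V → ℂ)

/-- The graph obtained from disjoint graphs `G₁`, `G₂` by adding an edge joining their roots. -/
def joinRoots {V₁ V₂ : Type} (G₁ : SimpleGraph V₁) (G₂ : SimpleGraph V₂) (r₁ : V₁) (r₂ : V₂) :
    SimpleGraph (V₁ ⊕ V₂) :=
  SimpleGraph.fromRel (fun a b =>
    (∃ x y, a = Sum.inl x ∧ b = Sum.inl y ∧ G₁.Adj x y) ∨
    (∃ x y, a = Sum.inr x ∧ b = Sum.inr y ∧ G₂.Adj x y) ∨
    (a = Sum.inl r₁ ∧ b = Sum.inr r₂))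

/-!
If every eigenvalue of `A` were an integer, then `q(A)` would be positive semidefinite for
`q = X²(X² - 1)(X² - 4) = X⁶ - 5X⁴ + 4X²`, because `q ≥ 0` on `ℤ`; so every diagonal entry of
`q(A)` would be nonnegative. Let `w = w₃` be the middle vertex of six consecutive edges
`w₀ w₁ ⋯ w₆` of the path, whose inner vertices `w₁, …, w₅` have degree `2`. Then, exactly as on
an infinite path, `A e_w = e₂ + e₄`, `A² e_w = e₁ + 2e₃ + e₅` and `A³ e_w = e₀ + 3e₂ + 3e₄ + e₆`,
and `(A ^ (2k)) w w = ‖A ^ k e_w‖²` gives `2`, `6` and `20`, so `q(A) w w = 20 - 30 + 8 = -2`.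
-/

open scoped MatrixOrder in
theorem Matrix.IsHermitian.posSemidef_aeval {n : Type*} [Fintype n] [DecidableEq n]
    {A : Matrix n n ℝ} (hA : A.IsHermitian) (q : ℝ[X])
    (hq : ∀ θ : ℝ, (∃ x : n → ℝ, x ≠ 0 ∧ A *ᵥ x = θ • x) → 0 ≤ q.eval θ) :
    (aeval A q).PosSemidef := by
  rw [← cfc_polynomial q A hA, ← nonneg_iff_posSemidef]
  refine cfc_nonneg fun θ hθ => ?_
  obtain ⟨i, rfl⟩ := hA.spectrum_real_eq_range_eigenvalues ▸ hθ
  exact hq _ ⟨_, fun h => hA.eigenvectorBasis.orthonormal.ne_zero i (by simpa using h),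
    hA.mulVec_eigenvectorBasis i⟩

theorem Matrix.IsSymm.pow_add_self_apply {n α : Type*} [Fintype n] [DecidableEq n]
    [CommSemiring α] {A : Matrix n n α} (hA : A.IsSymm) (k : ℕ) (i j : n) :
    (A ^ (k + k)) i j = (A ^ k *ᵥ Pi.single i 1) ⬝ᵥ (A ^ k *ᵥ Pi.single j 1) := by
  rw [pow_add, mul_apply', mulVec_single_one, mulVec_single_one]
  congr 1
  ext l
  exact (hA.pow k).apply l i

theorem Int.sq_mul_sq_sub_one_mul_sq_sub_four_nonneg (z : ℤ) :
    0 ≤ z ^ 2 * (z ^ 2 - 1) * (z ^ 2 - 4) := by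
  rcases le_or_gt |z| 1 with h | h
  · obtain ⟨h₁, h₂⟩ := abs_le.mp h
    interval_cases z <;> norm_num
  · have h4 : 4 ≤ z ^ 2 := by nlinarith [sq_abs z]
    exact mul_nonneg (mul_nonneg (sq_nonneg z) (by linarith)) (by linarith)

theorem adjMat_eq_adjMatrix {V : Type} (G : SimpleGraph V) [DecidableRel G.Adj] :
    adjMat G = G.adjMatrix ℝ := by
  ext a b
  simp only [adjMat, SimpleGraph.adjMatrix_apply]
  congr

namespace SimpleGraph

variable {V : Type*} [Fintype V] [DecidableEq V] {G : SimpleGraph V} [DecidableRel G.Adj]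

theorem neighborFinset_eq_pair_of_degree_eq_two {x a b : V} (ha : G.Adj x a) (hb : G.Adj x b)
    (hab : a ≠ b) (hx : G.degree x = 2) : G.neighborFinset x = {a, b} :=
  (Finset.eq_of_subset_of_card_le (by simp [Finset.insert_subset_iff, ha, hb])
    (by rw [card_neighborFinset_eq_degree, hx, Finset.card_pair hab])).symm

theorem adjMatrix_mulVec_single_of_degree_eq_two {α : Type*} [NonAssocSemiring α] {x a b : V}
    (ha : G.Adj x a) (hb : G.Adj x b) (hab : a ≠ b) (hx : G.degree x = 2) :
    G.adjMatrix α *ᵥ Pi.single x 1 = Pi.single a 1 + Pi.single b 1 := by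
  have hN := neighborFinset_eq_pair_of_degree_eq_two ha hb hab hx
  ext y
  have hy : G.Adj y x ↔ y = a ∨ y = b := by
    rw [adj_comm, ← mem_neighborFinset, hN, Finset.mem_insert, Finset.mem_singleton]
  by_cases hya : y = a
  · subst hya; simp [hy, hab]
  · by_cases hyb : y = b
    · subst hyb; simp [hy, Ne.symm hab]
    · simp [hy, hya, hyb]

theorem adjMatrix_aeval_apply_eq_neg_two (s : ℕ → V) (hadj : ∀ i < 6, G.Adj (s i) (s (i + 1)))
    (hdeg : ∀ i, 1 ≤ i → i ≤ 5 → G.degree (s i) = 2) (hinj : Set.InjOn s {i | i ≤ 6}) :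
    aeval (G.adjMatrix ℝ) (X ^ 6 - (5 : ℝ) • X ^ 4 + (4 : ℝ) • X ^ 2 : ℝ[X]) (s 3) (s 3) = -2 := by
  set A := G.adjMatrix ℝ
  set e : ℕ → V → ℝ := fun i => Pi.single (s i) 1 with he
  have hs : ∀ i ≤ 6, ∀ j ≤ 6, s i = s j ↔ i = j := fun i hi j hj => hinj.eq_iff hi hj
  have hcol : ∀ i < 5, A *ᵥ e (i + 1) = e i + e (i + 2) := fun i hi =>
    adjMatrix_mulVec_single_of_degree_eq_two (hadj i (by omega)).symm (hadj (i + 1) (by omega))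
      (fun h => by have := (hs i (by omega) (i + 2) (by omega)).mp h; omega)
      (hdeg _ (by omega) (by omega))
  have v1 : A ^ 1 *ᵥ e 3 = e 2 + e 4 := by rw [pow_one]; exact hcol 2 (by norm_num)
  have v2 : A ^ 2 *ᵥ e 3 = e 1 + e 3 + (e 3 + e 5) := by
    rw [pow_succ', ← mulVec_mulVec, v1, mulVec_add, hcol 1 (by norm_num), hcol 3 (by norm_num)]
  have v3 : A ^ 3 *ᵥ e 3 = e 0 + e 2 + (e 2 + e 4) + (e 2 + e 4 + (e 4 + e 6)) := by
    rw [pow_succ', ← mulVec_mulVec, v2, mulVec_add, mulVec_add, mulVec_add, hcol 0 (by norm_num),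
      hcol 2 (by norm_num), hcol 4 (by norm_num)]
  have hdiag (k : ℕ) : (A ^ (k + k)) (s 3) (s 3) = (A ^ k *ᵥ e 3) ⬝ᵥ (A ^ k *ᵥ e 3) :=
    G.isSymm_adjMatrix.pow_add_self_apply k _ _
  have d2 : (A ^ 2) (s 3) (s 3) = 2 := by
    rw [hdiag 1, v1]
    norm_num [he, hs]
  have d4 : (A ^ 4) (s 3) (s 3) = 6 := by
    rw [hdiag 2, v2]
    norm_num [he, hs]
  have d6 : (A ^ 6) (s 3) (s 3) = 20 := by
    rw [hdiag 3, v3]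
    norm_num [he, hs]
  simp only [map_add, map_sub, map_smul, map_pow, aeval_X, Matrix.add_apply, Matrix.sub_apply,
    Matrix.smul_apply, smul_eq_mul, d2, d4, d6]
  norm_num

end SimpleGraph

theorem statement_17_general {V : Type} [Fintype V] [DecidableEq V] (G : SimpleGraph V)
    [DecidableRel G.Adj] (u v : V) (p : G.Path u v)
    (hlen : 7 ≤ (p : G.Walk u v).length)
    (hdeg : ∀ w ∈ (p : G.Walk u v).support, w ≠ u → w ≠ v → G.degree w = 2) :
    ∃ θ : ℝ, (∃ x : V → ℝ, x ≠ 0 ∧ adjMat G *ᵥ x = θ • x) ∧ ∀ z : ℤ, θ ≠ (z : ℝ) := by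
  by_contra! hint
  have hp := p.property
  set s := (p : G.Walk u v).getVert
  have hinj : Set.InjOn s {i | i ≤ 6} :=
    hp.getVert_injOn.mono fun i (hi : i ≤ 6) => show i ≤ _ by omega
  have hinner : ∀ i, 1 ≤ i → i ≤ 5 → G.degree (s i) = 2 := fun i h₁ h₅ =>
    hdeg _ (SimpleGraph.Walk.getVert_mem_support _ _)
      (fun h => by have := (hp.getVert_eq_start_iff (by omega)).mp h; omega)
      (fun h => by have := (hp.getVert_eq_end_iff (by omega)).mp h; omega)
  have hpsd := (G.isHermitian_adjMatrix ℝ).posSemidef_aeval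
    (X ^ 6 - (5 : ℝ) • X ^ 4 + (4 : ℝ) • X ^ 2) fun θ hθ => by
      obtain ⟨z, rfl⟩ := hint θ (adjMat_eq_adjMatrix G ▸ hθ)
      have h : (0 : ℝ) ≤ z ^ 2 * (z ^ 2 - 1) * (z ^ 2 - 4) := by
        exact_mod_cast Int.sq_mul_sq_sub_one_mul_sq_sub_four_nonneg z
      simp only [eval_add, eval_sub, eval_smul, eval_pow, eval_X, smul_eq_mul]
      linarith
  have hneg := SimpleGraph.adjMatrix_aeval_apply_eq_neg_two s
    (fun i hi => SimpleGraph.Walk.adj_getVert_succ _ (by omega)) hinner hinj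
  linarith [hpsd.diag_nonneg (i := s 3)]

/-- a graph with a unique path of length at least `7` between two vertices,
all of whose inner vertices have degree `2`, has a non-integer eigenvalue. -/
theorem statement_17 {V : Type} [Fintype V] [DecidableEq V] (G : SimpleGraph V)
    [DecidableRel G.Adj] (u v : V) (p : G.Path u v)
    (huniq : ∀ q : G.Path u v, q = p)
    (hlen : 7 ≤ (p : G.Walk u v).length)
    (hdeg : ∀ w ∈ (p : G.Walk u v).support, w ≠ u → w ≠ v → G.degree w = 2) :
    ∃ θ : ℝ, (∃ x : V → ℝ, x ≠ 0 ∧ adjMat G *ᵥ x = θ • x) ∧ ∀ z : ℤ, θ ≠ (z : ℝ) :=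
  statement_17_general G u v p hlen hdeg
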